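/- Let σ be a Hanabi deck over n values and c colors with hand size h, and let d be a color such that every value of color d occurs exactly once in σ. Suppose that for some value i and some t ≥ 1, the cards (i+1,d),…,(i+t,d) all occur at positions before position ℓ, the card (i,d) occurs at a position ≥ r where r ≥ ℓ, and no card of color d occurs at any position in the interval [ℓ, r). Then in any winning play sequence for σ with hand size h, at every moment while the cards at positions in [ℓ, r) are being processed, the hand contains the t cards (i+1,d),…,(i+t,d); in particular, at most h−t cards not of color d are stored in hand at any such moment. -/
import Mathlib


/-- A card is a pair (value, color). -/
abbrev Card : Type := ℕ × ℕ

/-- The card at (0-indexed) position `i` of deck `σ` (junk `(0,0)` when out of range). -/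
def nth (σ : List Card) (i : ℕ) : Card := σ.getD i (0, 0)

/-- A configuration: for each color, the highest value played so far in that color
(values `1,…,played k` of color `k` count as played), the hand (the set of positions
of the cards currently stored), and the set of positions of the cards played so far. -/
structure Config where
  played : ℕ → ℕ
  hand : Finset ℕ
  done : Finset ℕ

/-- `PlayFromHand σ cfg cfg'`: starting from `cfg`, play zero or more cards stored
in the hand (each playable card increments the progress of its color). -/
inductive PlayFromHand (σ : List Card) : Config → Config → Prop
  | refl (cfg : Config) : PlayFromHand σ cfg cfg
  | play (cfg cfg' : Config) (j : ℕ) (hj : j ∈ cfg.hand)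
      (hplay : cfg.played (nth σ j).2 + 1 = (nth σ j).1)
      (htail : PlayFromHand σ
        ⟨Function.update cfg.played (nth σ j).2 (nth σ j).1,
          cfg.hand.erase j, insert j cfg.done⟩ cfg') :
      PlayFromHand σ cfg cfg'

/-- `Step σ h i cfg cfg'`: processing the drawn card at position `i` with hand size `h`,
the player either discards it, stores it (the hand may never exceed `h` cards), or plays
it immediately (followed by playing any number of stored cards). -/
inductive Step (σ : List Card) (h : ℕ) (i : ℕ) : Config → Config → Prop
  | discard (cfg : Config) : Step σ h i cfg cfg
  | store (cfg : Config) (hsize : (insert i cfg.hand).card ≤ h) :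
      Step σ h i cfg ⟨cfg.played, insert i cfg.hand, cfg.done⟩
  | playNow (cfg cfg' : Config)
      (hplay : cfg.played (nth σ i).2 + 1 = (nth σ i).1)
      (htail : PlayFromHand σ
        ⟨Function.update cfg.played (nth σ i).2 (nth σ i).1,
          cfg.hand, insert i cfg.done⟩ cfg') :
      Step σ h i cfg cfg'

/-- The initial configuration: nothing played, empty hand. -/
def Config.initial : Config := ⟨fun _ => 0, ∅, ∅⟩

/-- A play sequence with hand size `h` on deck `σ`, starting from configuration `start`:
a sequence of configurations where the `i`-th step processes the card at position `i`. -/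
structure PlaySeq (σ : List Card) (h : ℕ) (start : Config) where
  cfgs : ℕ → Config
  init : cfgs 0 = start
  step : ∀ i < σ.length, Step σ h i (cfgs i) (cfgs (i + 1))

/-- The final configuration of a play sequence. -/
def PlaySeq.final {σ : List Card} {h : ℕ} {start : Config} (ps : PlaySeq σ h start) :
    Config := ps.cfgs σ.length

/-- A winning play sequence: for every color `k ∈ {1,…,c}`, all values `1,…,n` are played. -/
def PlaySeq.Winning {σ : List Card} {h : ℕ} {start : Config} (ps : PlaySeq σ h start)
    (n c : ℕ) : Prop :=
  ∀ k, 1 ≤ k → k ≤ c → n ≤ ps.final.played k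

/-- `σ` is a deck over `n` values and `c` colors. -/
def ValidDeck (σ : List Card) (n c : ℕ) : Prop :=
  ∀ cd ∈ σ, 1 ≤ cd.1 ∧ cd.1 ≤ n ∧ 1 ≤ cd.2 ∧ cd.2 ≤ c

lemma nth_mem (σ : List Card) {j : ℕ} (hj : j < σ.length) : nth σ j ∈ σ := by
  rw [nth, List.getD_eq_getElem _ _ hj]; exact List.getElem_mem hj

lemma nth_unique_aux (σ : List Card) {x : Card} {p1 p2 : ℕ} (hc : σ.count x = 1)
    (h1 : p1 < p2) (h2 : p2 < σ.length)
    (e1 : nth σ p1 = x) (e2 : nth σ p2 = x) : False := by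
  have hp1 : p1 < σ.length := h1.trans h2
  rw [nth, List.getD_eq_getElem _ _ hp1] at e1
  rw [nth, List.getD_eq_getElem _ _ h2] at e2
  have hmem1 : x ∈ σ.take p2 := by
    rw [← e1]
    have hlt : p1 < (σ.take p2).length := by simp; omega
    have : (σ.take p2)[p1] = σ[p1] := List.getElem_take ..
    exact this ▸ List.getElem_mem hlt
  have hmem2 : x ∈ σ.drop p2 := by
    rw [← e2]
    have hlt : 0 < (σ.drop p2).length := by simp; omega
    have : (σ.drop p2)[0] = σ[p2] := by simp
    exact this ▸ List.getElem_mem hlt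
  have := List.count_pos_iff.mpr hmem1
  have := List.count_pos_iff.mpr hmem2
  have hsplit : (σ.take p2).count x + (σ.drop p2).count x = σ.count x := by
    rw [← List.count_append, List.take_append_drop]
  omega

lemma nth_unique (σ : List Card) {x : Card} {p1 p2 : ℕ} (hc : σ.count x = 1)
    (h1 : p1 < σ.length) (h2 : p2 < σ.length)
    (e1 : nth σ p1 = x) (e2 : nth σ p2 = x) : p1 = p2 := by
  rcases Nat.lt_trichotomy p1 p2 with h | h | h
  · exact absurd (nth_unique_aux σ hc h h2 e1 e2) not_false
  · exact h
  · exact absurd (nth_unique_aux σ hc h h1 e2 e1) not_false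

def Good (σ : List Card) (h idx : ℕ) (cfg : Config) : Prop :=
  (∀ j ∈ cfg.hand, j < idx ∧ j < σ.length) ∧
  (∀ j ∈ cfg.done, j < idx ∧ j < σ.length) ∧
  (∀ j ∈ cfg.done, (nth σ j).1 ≤ cfg.played (nth σ j).2) ∧
  (∀ k m, 1 ≤ m → m ≤ cfg.played k → ∃ j, j ∈ cfg.done ∧ nth σ j = (m, k)) ∧
  cfg.hand.card ≤ h

lemma Good.mono {σ : List Card} {h idx idx' : ℕ} {cfg : Config}
    (hg : Good σ h idx cfg) (hle : idx ≤ idx') : Good σ h idx' cfg := by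
  obtain ⟨Hh, Hd, HA, HB, Hc⟩ := hg
  exact ⟨fun j hj => ⟨lt_of_lt_of_le (Hh j hj).1 hle, (Hh j hj).2⟩,
    fun j hj => ⟨lt_of_lt_of_le (Hd j hj).1 hle, (Hd j hj).2⟩, HA, HB, Hc⟩

/-- Playing a single card `j` (whose position satisfies the bound) preserves `Good`. -/
lemma good_play {σ : List Card} {h idx : ℕ} {cfg : Config} {j : ℕ}
    (hg : Good σ h idx cfg) (hjb : j < idx ∧ j < σ.length)
    (hplay : cfg.played (nth σ j).2 + 1 = (nth σ j).1) (hand' : Finset ℕ)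
    (hsub : hand' ⊆ cfg.hand) :
    Good σ h idx ⟨Function.update cfg.played (nth σ j).2 (nth σ j).1,
      hand', insert j cfg.done⟩ := by
  obtain ⟨Hh, Hd, HA, HB, Hc⟩ := hg
  have hmono : ∀ k, cfg.played k ≤
      Function.update cfg.played (nth σ j).2 (nth σ j).1 k := by
    intro k
    rw [Function.update_apply]
    split
    next hk => subst hk; omega
    next => exact le_rfl
  refine ⟨fun j' hj' => Hh j' (hsub hj'), ?_, ?_, ?_, ?_⟩
  · intro j' hj'
    rcases Finset.mem_insert.mp hj' with rfl | hj'
    · exact hjb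
    · exact Hd j' hj'
  · intro j' hj'
    rcases Finset.mem_insert.mp hj' with rfl | hj'
    · dsimp only
      rw [Function.update_self]
    · exact le_trans (HA j' hj') (hmono _)
  · intro k m hm1 hm2
    dsimp only at hm2
    by_cases hk : k = (nth σ j).2
    · subst hk
      rw [Function.update_self] at hm2
      rcases Nat.lt_or_ge m (nth σ j).1 with hlt | hge
      · obtain ⟨j', hj', he⟩ := HB (nth σ j).2 m hm1 (by omega)
        exact ⟨j', Finset.mem_insert_of_mem hj', he⟩
      · have hme : m = (nth σ j).1 := le_antisymm hm2 hge
        refine ⟨j, Finset.mem_insert_self _ _, ?_⟩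
        rw [hme]
    · rw [Function.update_of_ne hk] at hm2
      obtain ⟨j', hj', he⟩ := HB k m hm1 hm2
      exact ⟨j', Finset.mem_insert_of_mem hj', he⟩
  · exact le_trans (Finset.card_le_card hsub) Hc

lemma pfh_good {σ : List Card} {h idx : ℕ} {cfg cfg' : Config}
    (hp : PlayFromHand σ cfg cfg') :
    Good σ h idx cfg →
      Good σ h idx cfg' ∧ cfg'.hand ⊆ cfg.hand ∧ cfg.done ⊆ cfg'.done ∧
        cfg'.done ⊆ cfg.done ∪ cfg.hand := by
  induction hp with
  | refl cfg => exact fun hg => ⟨hg, subset_rfl, subset_rfl, Finset.subset_union_left⟩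
  | play cfg cfg' j hj hplay htail ih =>
    intro hg
    have hjb := hg.1 j hj
    have hgood1 := good_play hg hjb hplay (cfg.hand.erase j) (Finset.erase_subset _ _)
    obtain ⟨hg', hh', hd1, hd2⟩ := ih hgood1
    refine ⟨hg', fun x hx => Finset.mem_of_mem_erase (hh' hx), ?_, ?_⟩
    · intro x hx
      exact hd1 (Finset.mem_insert_of_mem hx)
    · intro x hx
      rcases Finset.mem_union.mp (hd2 hx) with hx' | hx'
      · rcases Finset.mem_insert.mp hx' with rfl | hx''
        · exact Finset.mem_union_right _ hj
        · exact Finset.mem_union_left _ hx''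
      · exact Finset.mem_union_right _ (Finset.mem_of_mem_erase hx')

lemma step_good {σ : List Card} {h idx : ℕ} {cfg cfg' : Config}
    (hst : Step σ h idx cfg cfg') (hidx : idx < σ.length) (hg : Good σ h idx cfg) :
    Good σ h (idx + 1) cfg' ∧ cfg'.hand ⊆ insert idx cfg.hand ∧
      cfg.done ⊆ cfg'.done ∧ cfg'.done ⊆ insert idx (cfg.done ∪ cfg.hand) := by
  have hg1 : Good σ h (idx + 1) cfg := hg.mono (Nat.le_succ _)
  cases hst with
  | discard =>
    exact ⟨hg1, Finset.subset_insert _ _, subset_rfl,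
      fun x hx => Finset.mem_insert_of_mem (Finset.mem_union_left _ hx)⟩
  | store hsize =>
    obtain ⟨Hh, Hd, HA, HB, Hc⟩ := hg1
    refine ⟨⟨?_, Hd, HA, HB, hsize⟩, subset_rfl, subset_rfl,
      fun x hx => Finset.mem_insert_of_mem (Finset.mem_union_left _ hx)⟩
    intro j hj
    rcases Finset.mem_insert.mp hj with rfl | hj
    · exact ⟨Nat.lt_succ_self _, hidx⟩
    · exact Hh j hj
  | playNow cfg' hplay htail =>
    have hgood1 := good_play hg1 ⟨Nat.lt_succ_self _, hidx⟩ hplay cfg.hand subset_rfl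
    obtain ⟨hg', hh', hd1, hd2⟩ := pfh_good htail hgood1
    refine ⟨hg', fun x hx => Finset.mem_insert_of_mem (hh' hx), ?_, ?_⟩
    · intro x hx; exact hd1 (Finset.mem_insert_of_mem hx)
    · intro x hx
      rcases Finset.mem_union.mp (hd2 hx) with hx' | hx'
      · rcases Finset.mem_insert.mp hx' with rfl | hx''
        · exact Finset.mem_insert_self _ _
        · exact Finset.mem_insert_of_mem (Finset.mem_union_left _ hx'')
      · exact Finset.mem_insert_of_mem (Finset.mem_union_right _ hx')

lemma good_all {σ : List Card} {h : ℕ} (ps : PlaySeq σ h Config.initial) :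
    ∀ q, q ≤ σ.length → Good σ h q (ps.cfgs q) := by
  intro q
  induction q with
  | zero =>
    intro _
    rw [ps.init]
    refine ⟨by simp [Config.initial], by simp [Config.initial], by simp [Config.initial],
      ?_, by simp [Config.initial]⟩
    intro k m hm1 hm2
    simp [Config.initial] at hm2
    omega
  | succ q ih =>
    intro hq
    have hq' : q < σ.length := hq
    exact (step_good (ps.step q hq') hq' (ih hq'.le)).1

lemma persist {σ : List Card} {h : ℕ} (ps : PlaySeq σ h Config.initial)
    {p q : ℕ} (hp : p < q)
    (hh : p ∉ (ps.cfgs q).hand) (hd : p ∉ (ps.cfgs q).done) :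
    ∀ q', q ≤ q' → q' ≤ σ.length →
      p ∉ (ps.cfgs q').hand ∧ p ∉ (ps.cfgs q').done := by
  intro q' hq1 hq2
  induction q' with
  | zero => omega
  | succ q' ih =>
    rcases Nat.lt_or_ge q (q' + 1) with hlt | hge
    · have hq'len : q' < σ.length := hq2
      obtain ⟨hih1, hih2⟩ := ih (by omega) (by omega)
      obtain ⟨_, hsub, _, hdsub⟩ := step_good (ps.step q' hq'len)
        hq'len (good_all ps q' hq'len.le)
      constructor
      · intro hmem
        rcases Finset.mem_insert.mp (hsub hmem) with rfl | hmem'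
        · omega
        · exact hih1 hmem'
      · intro hmem
        rcases Finset.mem_insert.mp (hdsub hmem) with rfl | hmem'
        · omega
        · rcases Finset.mem_union.mp hmem' with hx | hx
          · exact hih2 hx
          · exact hih1 hx
    · have : q = q' + 1 := by omega
      exact ⟨this ▸ hh, this ▸ hd⟩

/-- hand dump / hand reduction gadget. Suppose every value of color
`d` occurs exactly once in `σ`, the cards `(i+1,d),…,(i+t,d)` all occur before position
`ℓ`, the card `(i,d)` occurs at a position `≥ r ≥ ℓ`, and no card of color `d` occurs at
a position in `[ℓ, r)`. Then in any winning play sequence with hand size `h`, at every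
moment while the positions in `[ℓ, r)` are being processed the hand contains the `t`
cards `(i+1,d),…,(i+t,d)`; in particular at most `h - t` cards not of color `d` are
stored at any such moment. -/
theorem hand_dump_gadget
    (σ : List Card) (n c h d : ℕ)
    (hval : ValidDeck σ n c) (hd1 : 1 ≤ d) (hdc : d ≤ c)
    (hunique : ∀ a, 1 ≤ a → a ≤ n → σ.count (a, d) = 1)
    (i t ℓ r : ℕ) (ht : 1 ≤ t) (hlr : ℓ ≤ r)
    (hbefore : ∀ m, i + 1 ≤ m → m ≤ i + t → ∃ j, j < ℓ ∧ j < σ.length ∧ nth σ j = (m, d))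
    (hafter : ∃ j, r ≤ j ∧ j < σ.length ∧ nth σ j = (i, d))
    (hgap : ∀ j, ℓ ≤ j → j < r → (nth σ j).2 ≠ d)
    (ps : PlaySeq σ h Config.initial) (hwin : ps.Winning n c) :
    ∀ q, ℓ ≤ q → q ≤ r →
      (∀ m, i + 1 ≤ m → m ≤ i + t →
        ∃ j ∈ (ps.cfgs q).hand, nth σ j = (m, d)) ∧
      ((ps.cfgs q).hand.filter (fun j => (nth σ j).2 ≠ d)).card ≤ h - t := by
  obtain ⟨jr, hjr1, hjr2, hjr3⟩ := hafter
  have hid : 1 ≤ i ∧ i ≤ n := by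
    have := hval _ (nth_mem σ hjr2)
    rw [hjr3] at this
    exact ⟨this.1, this.2.1⟩
  intro q hlq hqr
  have hqlen : q ≤ σ.length := by omega
  have hgq := good_all ps q hqlen
  have hgfin := good_all ps σ.length le_rfl
  have key : ∀ m, i + 1 ≤ m → m ≤ i + t →
      ∃ j ∈ (ps.cfgs q).hand, nth σ j = (m, d) := by
    intro m hm1 hm2
    obtain ⟨p, hpl, hplen, hpnth⟩ := hbefore m hm1 hm2
    have hmn : 1 ≤ m ∧ m ≤ n := by
      have := hval _ (nth_mem σ hplen)
      rw [hpnth] at this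
      exact ⟨this.1, this.2.1⟩
    have hpfin : p ∈ (ps.cfgs σ.length).done := by
      have hwd : n ≤ (ps.cfgs σ.length).played d := hwin d hd1 hdc
      obtain ⟨j, hjdone, hjnth⟩ := hgfin.2.2.2.1 d m hmn.1 (le_trans hmn.2 hwd)
      have hjlen : j < σ.length := (hgfin.2.1 j hjdone).2
      have : j = p := nth_unique σ (hunique m hmn.1 hmn.2) hjlen hplen hjnth hpnth
      exact this ▸ hjdone
    have hpq : p ∉ (ps.cfgs q).done := by
      intro hcon
      have h1 : m ≤ (ps.cfgs q).played d := by
        have h2 := hgq.2.2.1 p hcon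
        rw [hpnth] at h2
        exact h2
      obtain ⟨j, hjdone, hjnth⟩ := hgq.2.2.2.1 d i hid.1 (by omega)
      have hjb := hgq.2.1 j hjdone
      have : j = jr := nth_unique σ (hunique i hid.1 hid.2) hjb.2 hjr2 hjnth hjr3
      omega
    have hhand : p ∈ (ps.cfgs q).hand := by
      by_contra hno
      exact (persist ps (show p < q by omega) hno hpq σ.length hqlen le_rfl).2 hpfin
    exact ⟨p, hhand, hpnth⟩
  refine ⟨key, ?_⟩
  have hsurj : Set.SurjOn (fun j => (nth σ j).1)
      (((ps.cfgs q).hand.filter (fun j => (nth σ j).2 = d) : Finset ℕ) : Set ℕ)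
      ((Finset.Icc (i + 1) (i + t) : Finset ℕ) : Set ℕ) := by
    intro m hm
    simp only [Finset.coe_Icc, Set.mem_Icc] at hm
    obtain ⟨j, hjh, hjn⟩ := key m hm.1 hm.2
    refine ⟨j, ?_, ?_⟩
    · simp only [Finset.coe_filter, Set.mem_setOf_eq]
      exact ⟨hjh, by rw [hjn]⟩
    · show (nth σ j).1 = m
      rw [hjn]
  have hcard1 : t ≤ ((ps.cfgs q).hand.filter (fun j => (nth σ j).2 = d)).card := by
    have := Finset.card_le_card_of_surjOn _ hsurj
    rw [Nat.card_Icc] at this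
    omega
  have hcard2 := Finset.card_filter_add_card_filter_not
      (s := (ps.cfgs q).hand) (p := fun j => (nth σ j).2 = d)
  have hch : (ps.cfgs q).hand.card ≤ h := hgq.2.2.2.2
  simp only [ne_eq]
  omega
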